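/- arXiv:2205.09896 — 4 statements merged into one kernel-verified Lean document; each statement's English description precedes it below -/
import Mathlib

section
/- Let R be a commutative ring, M a finitely generated projective R-module, and f a polynomial law from M to R such that f_R(0) = 0. If m ∈ M satisfies f_R(m) ∈ R^×, then m is unimodular. -/
/-!
STATEMENT 0: Let R be a commutative ring, M a finitely generated projective R-module,
and f a polynomial law from M to R such that f_R(0) = 0.  If m ∈ M satisfies
f_R(m) ∈ R^×, then m is unimodular.
-/

open TensorProduct

universe u

/-- A polynomial law (in the sense of Roby) from `M` to `N`:
a family of functions `S ⊗[R] M → S ⊗[R] N`, one for each commutative `R`-algebra `S`,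
natural in `S`. -/
structure PolyLaw (R : Type u) [CommRing R] (M N : Type u)
    [AddCommGroup M] [Module R M] [AddCommGroup N] [Module R N] : Type (u + 1) where
  toFun : ∀ (S : Type u) [CommRing S] [Algebra R S], S ⊗[R] M → S ⊗[R] N
  isCompat : ∀ (S S' : Type u) [CommRing S] [Algebra R S] [CommRing S'] [Algebra R S']
      (φ : S →ₐ[R] S') (x : S ⊗[R] M),
      LinearMap.rTensor N φ.toLinearMap (toFun S x) =
        toFun S' (LinearMap.rTensor M φ.toLinearMap x)

/-- The value of a polynomial law over the base ring `R` itself, viewed as a function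
`M → N` via the canonical identifications `R ⊗[R] M ≅ M` and `R ⊗[R] N ≅ N`. -/
noncomputable def PolyLaw.ground {R : Type u} [CommRing R] {M N : Type u}
    [AddCommGroup M] [Module R M] [AddCommGroup N] [Module R N]
    (f : PolyLaw R M N) (m : M) : N :=
  TensorProduct.lid R N (f.toFun R ((TensorProduct.lid R M).symm m))

/-!
Let `I = {λ m | λ ∈ M^*}` be the order ideal of `m`. A dual basis of the projective module `M`
shows `m ∈ I • M`, i.e. `m` vanishes in `(R ⧸ I) ⊗ M`. Naturality of `f` along `R → R ⧸ I` then
says that `f_R(m)` reduces to `f_{R/I}(0)`, which is the reduction of `f_R(0) = 0`. Hence the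
unit `f_R(m)` lies in `I`, so `I = R` and some `λ m` equals `1`.
-/

theorem Module.Projective.mem_range_eval_smul_top {R M : Type*} [CommRing R] [AddCommGroup M]
    [Module R M] [Module.Projective R M] (m : M) :
    m ∈ LinearMap.range (Module.Dual.eval R M m) • (⊤ : Submodule R M) := by
  obtain ⟨s, hs⟩ := Module.projective_def'.mp ‹Module.Projective R M›
  -- abstract the ideal so that rewriting `m` below leaves it untouched
  set I := LinearMap.range (Module.Dual.eval R M m)
  have hm : Finsupp.linearCombination R id (s m) = m := LinearMap.congr_fun hs m
  rw [← hm, Finsupp.linearCombination_apply, Finsupp.sum]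
  refine Submodule.sum_mem _ fun x _ => Submodule.smul_mem_smul ?_ Submodule.mem_top
  exact LinearMap.mem_range_self _ (Finsupp.lapply x ∘ₗ s)

theorem TensorProduct.one_tmul_eq_zero_iff {R M : Type*} [CommRing R] [AddCommGroup M]
    [Module R M] (I : Ideal R) (m : M) :
    (1 : R ⧸ I) ⊗ₜ[R] m = 0 ↔ m ∈ I • (⊤ : Submodule R M) := by
  rw [← LinearEquiv.map_eq_zero_iff (quotTensorEquivQuotSMul M I),
    quotTensorEquivQuotSMul_mk_one_tmul, Submodule.Quotient.mk_eq_zero]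

namespace PolyLaw

variable {R : Type u} [CommRing R] {M N : Type u} [AddCommGroup M] [Module R M]
  [AddCommGroup N] [Module R N]

theorem one_tmul_ground (f : PolyLaw R M N) (I : Ideal R) (m : M) :
    (1 : R ⧸ I) ⊗ₜ[R] f.ground m = f.toFun (R ⧸ I) ((1 : R ⧸ I) ⊗ₜ[R] m) := by
  have hnat := f.isCompat R (R ⧸ I) (Ideal.Quotient.mkₐ R I) ((TensorProduct.lid R M).symm m)
  rwa [← (TensorProduct.lid R N).symm_apply_apply (f.toFun R _), TensorProduct.lid_symm_apply,
    TensorProduct.lid_symm_apply, LinearMap.rTensor_tmul, LinearMap.rTensor_tmul,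
    AlgHom.toLinearMap_apply, map_one] at hnat

theorem ground_mem_smul_top {f : PolyLaw R M N} (h0 : f.ground 0 = 0) {I : Ideal R} {m : M}
    (hm : m ∈ I • (⊤ : Submodule R M)) : f.ground m ∈ I • (⊤ : Submodule R N) := by
  rw [← TensorProduct.one_tmul_eq_zero_iff] at hm ⊢
  rw [f.one_tmul_ground, hm, ← TensorProduct.tmul_zero M (1 : R ⧸ I), ← f.one_tmul_ground, h0,
    TensorProduct.tmul_zero]

end PolyLaw

theorem stmt_0_general (R : Type u) [CommRing R] (M : Type u) [AddCommGroup M] [Module R M]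
    [Module.Projective R M]
    (f : PolyLaw R M R) (h0 : f.ground 0 = 0)
    (m : M) (hm : IsUnit (f.ground m)) :
    ∃ lam : M →ₗ[R] R, lam m = 1 := by
  set I : Ideal R := LinearMap.range (Module.Dual.eval R M m)
  have hfm : f.ground m ∈ I := by
    simpa only [Ideal.smul_eq_mul, Ideal.mul_top] using
      PolyLaw.ground_mem_smul_top h0 (Module.Projective.mem_range_eval_smul_top m)
  obtain ⟨lam, hlam⟩ : (1 : R) ∈ I := (I.eq_top_of_isUnit_mem hfm hm).symm ▸ Submodule.mem_top
  exact ⟨lam, hlam⟩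

theorem stmt_0 (R : Type u) [CommRing R] (M : Type u) [AddCommGroup M] [Module R M]
    [Module.Finite R M] [Module.Projective R M]
    (f : PolyLaw R M R) (h0 : f.ground 0 = 0)
    (m : M) (hm : IsUnit (f.ground m)) :
    ∃ lam : M →ₗ[R] R, lam m = 1 :=
  stmt_0_general R M f h0 m hm
end

section
/- Let R be a commutative ring, M and N R-modules, A a unital associative R-algebra, and g a polynomial law from M to A such that there exists m ∈ M with g_R(m) invertible in A. Let d ≥ 0 and let f be a polynomial law from M to N that is homogeneous of degree d and satisfies: for every commutative R-algebra S and every x ∈ M ⊗_R S, if g_S(x) is invertible in A ⊗_R S then f_S(x) = 0. Then f is identically zero. -/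
/-!
STATEMENT 2: Let R be a commutative ring, M and N R-modules, A a unital associative
R-algebra, and g a polynomial law from M to A such that there exists m ∈ M with g_R(m)
invertible in A.  Let d ≥ 0 and let f be a polynomial law from M to N that is
homogeneous of degree d and satisfies: for every commutative R-algebra S and every
x ∈ M ⊗_R S, if g_S(x) is invertible in A ⊗_R S then f_S(x) = 0.  Then f is
identically zero.
-/

open TensorProduct

universe u

/-- Homogeneity of degree `d` of a polynomial law. -/
def PolyLaw.IsHomogeneous {R : Type u} [CommRing R] {M N : Type u}
    [AddCommGroup M] [Module R M] [AddCommGroup N] [Module R N]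
    (d : ℕ) (f : PolyLaw R M N) : Prop :=
  ∀ (S : Type u) [CommRing S] [Algebra R S] (s : S) (x : S ⊗[R] M),
    f.toFun S (s • x) = s ^ d • f.toFun S x

/-!
Put `a = 1 ⊗ m` and `B = S[X]/(X^(d+1))`. Since `X` is nilpotent in `B`, naturality along
`B → B/(X)` shows that `g_B(a + X x)` differs from the unit `g_B(a)` by a multiple of the central
nilpotent `X`, so it is a unit and `f_B(a + X x) = 0`. Thus `f_{S[X]}(X x + a)` has vanishing
`X^d`-coefficient, and by homogeneity that coefficient is `f_S(x)`.
-/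

section BaseChange

variable {R : Type u} [CommRing R] {M : Type u} [AddCommGroup M] [Module R M]

lemma rTensor_algHom_smul {S S' : Type u} [CommRing S] [Algebra R S] [CommRing S']
    [Algebra R S'] (φ : S →ₐ[R] S') (s : S) (x : S ⊗[R] M) :
    φ.toLinearMap.rTensor M (s • x) = φ s • φ.toLinearMap.rTensor M x := by
  induction x using TensorProduct.induction_on with
  | zero => simp
  | tmul s' m => simp [TensorProduct.smul_tmul']
  | add y z hy hz => simp [hy, hz]

lemma rTensor_rTensor_of_comp_eq {P Q Q' : Type*} [AddCommGroup P] [Module R P]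
    [AddCommGroup Q] [Module R Q] [AddCommGroup Q'] [Module R Q']
    {f : P →ₗ[R] Q} {g : Q →ₗ[R] Q'} {h : P →ₗ[R] Q'} (hfg : ∀ p, g (f p) = h p)
    (x : P ⊗[R] M) : g.rTensor M (f.rTensor M x) = h.rTensor M x := by
  rw [← LinearMap.rTensor_comp_apply, show g ∘ₗ f = h from LinearMap.ext hfg]

lemma rTensor_restrictScalars_rTensor_toAlgHom {S B B' : Type u} [CommRing S] [Algebra R S]
    [CommRing B] [Algebra R B] [Algebra S B] [IsScalarTower R S B]
    [CommRing B'] [Algebra R B'] [Algebra S B'] [IsScalarTower R S B']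
    (φ : B →ₐ[S] B') (x : S ⊗[R] M) :
    (φ.restrictScalars R).toLinearMap.rTensor M
        ((IsScalarTower.toAlgHom R S B).toLinearMap.rTensor M x) =
      (IsScalarTower.toAlgHom R S B').toLinearMap.rTensor M x := by
  rw [rTensor_rTensor_of_comp_eq]
  simp

lemma rTensor_toAlgHom_self {S : Type u} [CommRing S] [Algebra R S] (x : S ⊗[R] M) :
    (IsScalarTower.toAlgHom R S S).toLinearMap.rTensor M x = x := by
  rw [show (IsScalarTower.toAlgHom R S S).toLinearMap = LinearMap.id from rfl,
    LinearMap.rTensor_id_apply]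

lemma exists_eq_smul_of_rTensor_mkₐ_span_singleton_eq_zero {B : Type u} [CommRing B]
    [Algebra R B] {c : B} {w : B ⊗[R] M}
    (hw : (Ideal.Quotient.mkₐ R (Ideal.span {c})).toLinearMap.rTensor M w = 0) :
    ∃ v, w = c • v := by
  have hexact : Function.Exact (Algebra.lsmul R R B c)
      (Ideal.Quotient.mkₐ R (Ideal.span {c})).toLinearMap := by
    intro y
    rw [AlgHom.toLinearMap_apply, Ideal.Quotient.mkₐ_eq_mk, Ideal.Quotient.eq_zero_iff_mem,
      Ideal.mem_span_singleton, dvd_def]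
    simp [eq_comm]
  obtain ⟨v, rfl⟩ := (rTensor_exact M hexact (Ideal.Quotient.mkₐ_surjective R _) w).mp hw
  exact ⟨v, rfl⟩

end BaseChange

section Laurent

open Polynomial LaurentPolynomial

variable {S : Type*} [CommRing S]

variable (S) in
noncomputable def LaurentPolynomial.lcoeff (n : ℤ) : S[T;T⁻¹] →ₗ[S] S :=
  Finsupp.lapply n ∘ₗ (AddMonoidAlgebra.coeffLinearEquiv S).toLinearMap

lemma LaurentPolynomial.coeff_toLaurent_natCast (p : S[X]) (n : ℕ) :
    (toLaurent p).coeff n = p.coeff n := by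
  rw [coeff_toLaurent]
  exact Finsupp.mapDomain_apply Nat.castEmbedding.injective _ n

lemma LaurentPolynomial.coeff_T_mul (m n : ℤ) (f : S[T;T⁻¹]) :
    (T m * f).coeff n = f.coeff (n - m) := by
  rw [T, AddMonoidAlgebra.coeff_single_mul_apply, one_mul, neg_add_eq_sub]

lemma LaurentPolynomial.coeff_zero_invert_toLaurent (p : S[X]) :
    (invert (toLaurent p)).coeff 0 = aeval 0 p := by
  rw [invert_apply, neg_zero, ← Nat.cast_zero, coeff_toLaurent_natCast, coeff_zero_eq_aeval_zero]

end Laurent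

section Polynomial

open Polynomial

lemma Polynomial.rTensor_lcoeff_eq_zero_of_rTensor_mkₐ_eq_zero {R : Type u} [CommRing R]
    {S N : Type u} [CommRing S] [Algebra R S] [AddCommGroup N] [Module R N] {d : ℕ}
    {G : S[X] ⊗[R] N}
    (hG : (Ideal.Quotient.mkₐ R (Ideal.span {(X : S[X]) ^ (d + 1)})).toLinearMap.rTensor N G =
      0) :
    ((lcoeff S d).restrictScalars R).rTensor N G = 0 := by
  obtain ⟨v, rfl⟩ := exists_eq_smul_of_rTensor_mkₐ_span_singleton_eq_zero hG
  rw [TensorProduct.AlgebraTensorModule.smul_eq_lsmul_rTensor,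
    rTensor_rTensor_of_comp_eq (h := 0), LinearMap.rTensor_zero, LinearMap.zero_apply]
  intro p
  change (X ^ (d + 1) * p).coeff d = 0
  rw [coeff_X_pow_mul', if_neg (by omega)]

end Polynomial

lemma IsUnit.add_smul_of_isNilpotent {B D : Type*} [CommRing B] [Ring D] [Algebra B D]
    {u : D} (hu : IsUnit u) {c : B} (hc : IsNilpotent c) (v : D) : IsUnit (u + c • v) := by
  obtain ⟨u, rfl⟩ := hu
  obtain ⟨k, hk⟩ := hc
  have hfactor : (u : D) + c • v = u * (1 + c • (↑u⁻¹ * v)) := by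
    rw [mul_add, mul_one, mul_smul_comm, Units.mul_inv_cancel_left]
  have hnil : IsNilpotent (c • (↑u⁻¹ * v)) := ⟨k, by rw [_root_.smul_pow, hk, zero_smul]⟩
  rw [hfactor]
  exact u.isUnit.mul hnil.isUnit_one_add

namespace PolyLaw

variable {R : Type u} [CommRing R] {M N A : Type u} [AddCommGroup M] [Module R M]
  [AddCommGroup N] [Module R N] [Ring A] [Algebra R A]

lemma isUnit_toFun_one_tmul (g : PolyLaw R M A) {m : M} (hgm : IsUnit (g.ground m))
    (S : Type u) [CommRing S] [Algebra R S] : IsUnit (g.toFun S (1 ⊗ₜ m)) := by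
  have hR : g.toFun R (1 ⊗ₜ m) = (Algebra.TensorProduct.lid R A).symm (g.ground m) := by
    rw [PolyLaw.ground, TensorProduct.lid_symm_apply]
    exact ((Algebra.TensorProduct.lid R A).symm_apply_apply _).symm
  have hS := g.isCompat R S (Algebra.ofId R S) (1 ⊗ₜ m)
  rw [LinearMap.rTensor_tmul, AlgHom.toLinearMap_apply, map_one] at hS
  rw [← hS, hR]
  exact (hgm.map (Algebra.TensorProduct.lid R A).symm).map
    (Algebra.TensorProduct.rTensor A (Algebra.ofId R S))

lemma isUnit_toFun_add_smul (g : PolyLaw R M A) {B : Type u} [CommRing B] [Algebra R B]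
    {c : B} (hc : IsNilpotent c) {y : B ⊗[R] M} (hy : IsUnit (g.toFun B y)) (w : B ⊗[R] M) :
    IsUnit (g.toFun B (y + c • w)) := by
  set q := Ideal.Quotient.mkₐ R (Ideal.span {c})
  have hq : q.toLinearMap.rTensor A (g.toFun B (y + c • w) - g.toFun B y) = 0 := by
    rw [map_sub, g.isCompat, g.isCompat, map_add, rTensor_algHom_smul,
      Ideal.Quotient.mkₐ_eq_mk,
      Ideal.Quotient.eq_zero_iff_mem.mpr (Ideal.mem_span_singleton_self c), zero_smul, add_zero,
      sub_self]
  obtain ⟨v, hv⟩ := exists_eq_smul_of_rTensor_mkₐ_span_singleton_eq_zero hq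
  rw [sub_eq_iff_eq_add'.mp hv]
  exact hy.add_smul_of_isNilpotent hc v

end PolyLaw

namespace PolyLaw.IsHomogeneous

open Polynomial LaurentPolynomial

variable {R : Type u} [CommRing R] {M N : Type u} [AddCommGroup M] [Module R M]
  [AddCommGroup N] [Module R N] {S : Type u} [CommRing S] [Algebra R S]

lemma toFun_eq_rTensor_lcoeff {d : ℕ} {f : PolyLaw R M N} (hf : f.IsHomogeneous d)
    (x a : S ⊗[R] M) :
    f.toFun S x = ((Polynomial.lcoeff S d).restrictScalars R).rTensor N
      (f.toFun S[X] ((X : S[X]) • (IsScalarTower.toAlgHom R S S[X]).toLinearMap.rTensor M x +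
        (IsScalarTower.toAlgHom R S S[X]).toLinearMap.rTensor M a)) := by
  set ιP := (IsScalarTower.toAlgHom R S S[X]).toLinearMap.rTensor M
  set ιL := (IsScalarTower.toAlgHom R S S[T;T⁻¹]).toLinearMap.rTensor M
  set j : S[X] →ₐ[S] S[T;T⁻¹] := toLaurentAlg
  set σ : S[X] →ₐ[S] S[T;T⁻¹] := invert.toAlgHom.comp toLaurentAlg
  set ε : S[X] →ₐ[S] S := aeval 0
  set F := f.toFun S[T;T⁻¹] (ιL x + (T (-1) : S[T;T⁻¹]) • ιL a) with hF
  set G := f.toFun S[X] ((X : S[X]) • ιP x + ιP a)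
  set H := f.toFun S[X] (ιP x + (X : S[X]) • ιP a)
  -- Over `S[T;T⁻¹]`, `f (T • x + a) = T ^ d • f (x + T⁻¹ • a)`, and the constant
  -- coefficient of `f (x + T⁻¹ • a)` is `f x`, as it comes from `f (x + X • a)` by `X ↦ T⁻¹`.
  have hG : (j.restrictScalars R).toLinearMap.rTensor N G = (T d : S[T;T⁻¹]) • F := by
    have hjX : j.restrictScalars R X = T 1 := by simp [j]
    have hTd : (T d : S[T;T⁻¹]) = T 1 ^ d := by rw [T_pow, mul_one]
    rw [f.isCompat, map_add, rTensor_algHom_smul, rTensor_restrictScalars_rTensor_toAlgHom,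
      rTensor_restrictScalars_rTensor_toAlgHom, hjX, hTd, hF, ← hf, smul_add, smul_smul,
      ← T_add, add_neg_cancel, T_zero, one_smul]
  have hH : (σ.restrictScalars R).toLinearMap.rTensor N H = F := by
    have hσX : σ.restrictScalars R X = T (-1) := by simp [σ]
    rw [f.isCompat, map_add, rTensor_algHom_smul, rTensor_restrictScalars_rTensor_toAlgHom,
      rTensor_restrictScalars_rTensor_toAlgHom, hσX]
  have hε : (ε.restrictScalars R).toLinearMap.rTensor N H = f.toFun S x := by
    rw [f.isCompat, map_add, rTensor_algHom_smul, rTensor_restrictScalars_rTensor_toAlgHom,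
      rTensor_restrictScalars_rTensor_toAlgHom, rTensor_toAlgHom_self]
    simp [ε]
  calc f.toFun S x
      = (ε.restrictScalars R).toLinearMap.rTensor N H := hε.symm
    _ = ((LaurentPolynomial.lcoeff S 0).restrictScalars R).rTensor N F := by
      rw [← hH, rTensor_rTensor_of_comp_eq]
      exact coeff_zero_invert_toLaurent
    _ = ((LaurentPolynomial.lcoeff S d).restrictScalars R).rTensor N
          ((T d : S[T;T⁻¹]) • F) := by
      rw [TensorProduct.AlgebraTensorModule.smul_eq_lsmul_rTensor, rTensor_rTensor_of_comp_eq]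
      intro p
      change (T d * p).coeff d = p.coeff 0
      rw [coeff_T_mul, sub_self]
    _ = ((Polynomial.lcoeff S d).restrictScalars R).rTensor N G := by
      rw [← hG, rTensor_rTensor_of_comp_eq]
      exact (coeff_toLaurent_natCast · d)

end PolyLaw.IsHomogeneous

theorem stmt_2 (R : Type u) [CommRing R] (M N A : Type u)
    [AddCommGroup M] [Module R M] [AddCommGroup N] [Module R N]
    [Ring A] [Algebra R A]
    (g : PolyLaw R M A) (m : M) (hgm : IsUnit (g.ground m))
    (d : ℕ) (f : PolyLaw R M N) (hf : f.IsHomogeneous d)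
    (hvanish : ∀ (S : Type u) [CommRing S] [Algebra R S] (x : S ⊗[R] M),
      IsUnit (g.toFun S x) → f.toFun S x = 0) :
    ∀ (S : Type u) [CommRing S] [Algebra R S], ∀ x : S ⊗[R] M, f.toFun S x = 0 := by
  intro S _ _ x
  set I := Ideal.span {(Polynomial.X : Polynomial S) ^ (d + 1)}
  have hq : Ideal.Quotient.mkₐ R I = (Ideal.Quotient.mkₐ S I).restrictScalars R := rfl
  have hX : IsNilpotent (Ideal.Quotient.mkₐ R I Polynomial.X) := ⟨d + 1, by
    rw [← map_pow, Ideal.Quotient.mkₐ_eq_mk, Ideal.Quotient.eq_zero_iff_mem]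
    exact Ideal.mem_span_singleton_self _⟩
  rw [hf.toFun_eq_rTensor_lcoeff x (1 ⊗ₜ m)]
  apply Polynomial.rTensor_lcoeff_eq_zero_of_rTensor_mkₐ_eq_zero
  rw [f.isCompat, map_add, rTensor_algHom_smul, hq, rTensor_restrictScalars_rTensor_toAlgHom,
    rTensor_restrictScalars_rTensor_toAlgHom, ← hq]
  apply hvanish
  rw [LinearMap.rTensor_tmul, AlgHom.toLinearMap_apply, map_one, add_comm (_ • _)]
  exact g.isUnit_toFun_add_smul hX (g.isUnit_toFun_one_tmul hgm _) _
end

section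
/- Let R be a commutative ring and let C be a composition algebra over R with norm n_C and trace Tr_C. Then for every x ∈ C, x·x − Tr_C(x) • x + n_C(x) • 1_C = 0. -/
/-!
STATEMENT 9: Let R be a commutative ring and let C be a composition algebra over R with
norm n_C and trace Tr_C.  Then for every x ∈ C,
  x·x − Tr_C(x) • x + n_C(x) • 1_C = 0.
-/

/-- The conditions making a quadratic form `n` on a unital non-necessarily-associative
algebra `C` (finitely generated projective as an `R`-module) the norm of a composition
algebra: multiplicativity, `n 1 = 1`, and regularity of the bilinearization. -/
def IsCompositionNorm (R : Type*) [CommRing R] (C : Type*) [NonAssocRing C]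
    [Module R C] [SMulCommClass R C C] [IsScalarTower R C C]
    (n : QuadraticForm R C) : Prop :=
  (∀ x y : C, n (x * y) = n x * n y) ∧ n 1 = 1 ∧
    Function.Bijective (QuadraticMap.polarBilin n)

/-!
Polarizing `n (x * y) = n x * n y` in the left factor gives
`b(x y, w z) + b(w y, x z) = b(x, w) b(y, z)` for the bilinearization `b`; taking `w = 1`,
`y = x` and using `b(x, x z) = n(x) b(1, z)` yields `b(x², z) = b(x, 1) b(x, z) - n x b(1, z)` for every `z`, i.e. `x² - Tr(x) x + n(x) 1` is
`b`-orthogonal to everything, and it vanishes because `b` is nondegenerate.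
-/

open QuadraticMap

section MultiplicativeForm

variable {R C : Type*} [CommRing R]

theorem polar_mul_mul_left_of_map_mul [NonUnitalNonAssocRing C] [Module R C]
    {n : QuadraticForm R C} (hmul : ∀ x y : C, n (x * y) = n x * n y) (x y z : C) :
    polar n (x * y) (x * z) = n x * polar n y z := by
  simp only [polar, ← mul_add, hmul]
  ring

theorem polar_mul_add_polar_mul_of_map_mul [NonUnitalNonAssocRing C] [Module R C]
    {n : QuadraticForm R C} (hmul : ∀ x y : C, n (x * y) = n x * n y) (x w y z : C) :
    polar n (x * y) (w * z) + polar n (w * y) (x * z) = polar n x w * polar n y z := by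
  have h := polar_mul_mul_left_of_map_mul hmul (x + w) y z
  rw [add_mul, add_mul, polar_add_left, polar_add_right, polar_add_right,
    polar_mul_mul_left_of_map_mul hmul, polar_mul_mul_left_of_map_mul hmul,
    QuadraticMap.map_add n] at h
  linear_combination h

theorem polar_mul_self_of_map_mul [NonAssocRing C] [Module R C]
    {n : QuadraticForm R C} (hmul : ∀ x y : C, n (x * y) = n x * n y) (x z : C) :
    polar n (x * x) z = polar n x 1 * polar n x z - n x * polar n 1 z := by
  have h := polar_mul_add_polar_mul_of_map_mul hmul x 1 x z
  have h₁ := polar_mul_mul_left_of_map_mul hmul x 1 z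
  rw [one_mul, one_mul] at h
  rw [mul_one] at h₁
  linear_combination h - h₁

theorem mul_self_sub_polar_smul_add_smul_one_of_map_mul [NonAssocRing C] [Module R C]
    {n : QuadraticForm R C} (hmul : ∀ x y : C, n (x * y) = n x * n y)
    (hn : Function.Injective (polarBilin n)) (x : C) :
    x * x - polar n x 1 • x + n x • (1 : C) = 0 := by
  refine hn (LinearMap.ext fun z => ?_)
  simp only [polarBilin_apply_apply, map_zero, LinearMap.zero_apply, polar_add_left,
    polar_sub_left, polar_smul_left, polar_mul_self_of_map_mul hmul, smul_eq_mul]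
  ring

end MultiplicativeForm

theorem stmt_9_general (R : Type*) [CommRing R] (C : Type*) [NonAssocRing C]
    [Module R C] [SMulCommClass R C C] [IsScalarTower R C C]
    (n : QuadraticForm R C) (hn : IsCompositionNorm R C n) (x : C) :
    x * x - QuadraticMap.polar n x 1 • x + n x • (1 : C) = 0 :=
  mul_self_sub_polar_smul_add_smul_one_of_map_mul hn.1 hn.2.2.injective x

theorem stmt_9 (R : Type*) [CommRing R] (C : Type*) [NonAssocRing C]
    [Module R C] [SMulCommClass R C C] [IsScalarTower R C C]
    [Module.Finite R C] [Module.Projective R C]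
    (n : QuadraticForm R C) (hn : IsCompositionNorm R C n) (x : C) :
    x * x - QuadraticMap.polar n x 1 • x + n x • (1 : C) = 0 :=
  stmt_9_general R C n hn x
end

section
/- Let R be a commutative ring and let C be a unital not-necessarily-associative R-algebra that is finitely generated projective as an R-module. If n and n' are two quadratic forms on C each of which makes C a composition algebra over R (that is, each is multiplicative, takes the value 1 at 1_C, and has regular bilinearization), then n = n'. In other words, the norm of a composition algebra is uniquely determined by its algebra structure. -/
open QuadraticMap

namespace Module.Dual

variable {R M : Type*} [CommRing R] [AddCommGroup M] [Module R M]

theorem eq_zero_of_forall_apply_smul_self_eq_zero_of_free [Module.Free R M] (δ : Dual R M)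
    (h : ∀ x, δ x • x = 0) : δ = 0 := by
  let b := Module.Free.chooseBasis R M
  refine b.ext fun i => ?_
  simpa using congr(b.repr $(h (b i)) i)

theorem eq_zero_of_forall_apply_smul_self_eq_zero [Module.Finite R M] [Module.Projective R M]
    (δ : Dual R M) (h : ∀ x, δ x • x = 0) : δ = 0 := by
  ext x
  refine eq_zero_of_localization _ fun J _ => ?_
  let Rₚ := Localization.AtPrime J
  let ι := LocalizedModule.mkLinearMap J.primeCompl M
  have : Module.Free Rₚ (LocalizedModule J.primeCompl M) := free_of_flat_of_isLocalRing
  let δₚ : Dual Rₚ (LocalizedModule J.primeCompl M) :=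
    IsLocalizedModule.mapExtendScalars J.primeCompl ι (Algebra.linearMap R Rₚ) Rₚ δ
  have hδₚ : δₚ = 0 := by
    refine eq_zero_of_forall_apply_smul_self_eq_zero_of_free δₚ fun ξ => ?_
    obtain ⟨⟨m, s⟩, rfl⟩ := IsLocalizedModule.mk'_surjective J.primeCompl ι ξ
    -- `δₚ (m / s) • (m / s) = (δ m • m) / s ^ 2`
    simp only [Function.uncurry_apply_pair, δₚ, IsLocalizedModule.mapExtendScalars_apply_apply,
      IsLocalizedModule.map_mk', ← IsLocalization.mk'_eq_mk', IsLocalizedModule.mk'_smul_mk', h,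
      IsLocalizedModule.mk'_zero]
  simpa [δₚ] using congr($hδₚ (ι x))

theorem eq_zero_of_apply_smul_self_mem_span [Module.Finite R M] [Module.Projective R M]
    {f : Dual R M} {e : M} (hfe : f e = 1) (δ : Dual R M) (hδe : δ e = 0)
    (h : ∀ x, δ x • x ∈ R ∙ e) : δ = 0 := by
  let s : M →ₗ[R] LinearMap.ker f :=
    (LinearMap.id - f.smulRight e).codRestrict _ fun x => by simp [hfe]
  have hs_apply (x : M) : (s x : M) = x - f x • e := rfl
  have hs : s ∘ₗ (LinearMap.ker f).subtype = LinearMap.id :=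
    LinearMap.ext fun p => Subtype.ext <| by simp [hs_apply, LinearMap.mem_ker.mp p.2]
  have : Module.Projective R (LinearMap.ker f) := .of_split _ s hs
  have : Module.Finite R (LinearMap.ker f) :=
    .of_surjective s (LinearMap.surjective_of_comp_eq_id _ _ hs)
  have hker : δ ∘ₗ (LinearMap.ker f).subtype = 0 := by
    refine eq_zero_of_forall_apply_smul_self_eq_zero _ fun p => Subtype.ext ?_
    obtain ⟨a, ha⟩ := Submodule.mem_span_singleton.mp (h p)
    have ha0 : a = 0 := by simpa [hfe, LinearMap.mem_ker.mp p.2] using congr(f $ha)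
    simpa [ha0] using ha.symm
  ext x
  simpa [hs_apply, hδe] using congr($hker (s x))

end Module.Dual

namespace QuadraticMap

variable {R M N : Type*} [CommRing R] [AddCommGroup M] [Module R M] [AddCommGroup N] [Module R N]

theorem exists_linearMap_apply_eq [Module.Projective R M] (Q : QuadraticMap R M N) (x : M) :
    ∃ f : M →ₗ[R] N, f x = Q x := by
  obtain ⟨s, hs⟩ := Module.projective_def'.mp (inferInstance : Module.Projective R M)
  obtain ⟨B, hB⟩ := LinearMap.BilinMap.toQuadraticMap_surjective
    (Q.comp (Finsupp.linearCombination R id))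
  refine ⟨B (s x) ∘ₗ s, ?_⟩
  have hsx : Finsupp.linearCombination R id (s x) = x := LinearMap.congr_fun hs x
  simpa [hsx] using congr($hB (s x))

section Composition

variable {C : Type*} [NonAssocRing C] [Module R C] {q : QuadraticForm R C}

theorem polar_mul_mul_left (hq : ∀ x y : C, q (x * y) = q x * q y) (x y w : C) :
    polar q (x * y) (x * w) = q x * polar q y w := by
  simp only [polar, ← mul_add, hq]
  ring

theorem polar_mul_mul_add_polar_mul_mul (hq : ∀ x y : C, q (x * y) = q x * q y)
    (x y z w : C) :
    polar q (x * y) (z * w) + polar q (z * y) (x * w) = polar q x z * polar q y w := by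
  have h := polar_mul_mul_left hq (x + z) y w
  simp only [add_mul, polar_add_left, polar_add_right, polar_mul_mul_left hq,
    QuadraticMap.map_add q x z] at h
  linear_combination h

theorem mul_self_eq_polar_smul_sub_smul_one (hq : ∀ x y : C, q (x * y) = q x * q y)
    (hinj : Function.Injective (polarBilin q)) (x : C) :
    x * x = polar q x 1 • x - q x • (1 : C) := by
  refine hinj (LinearMap.ext fun z => ?_)
  have h := polar_mul_mul_add_polar_mul_mul hq x x 1 z
  simp only [one_mul] at h
  have h' := polar_mul_mul_left hq x 1 z
  simp only [mul_one] at h'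
  simp only [polarBilin_apply_apply, map_sub, map_smul, LinearMap.sub_apply,
    LinearMap.smul_apply, smul_eq_mul]
  linear_combination h - h'

end Composition

end QuadraticMap

theorem stmt_10 (R : Type*) [CommRing R] (C : Type*) [NonAssocRing C]
    [Module R C] [SMulCommClass R C C] [IsScalarTower R C C]
    [Module.Finite R C] [Module.Projective R C]
    (n n' : QuadraticForm R C)
    (hn : IsCompositionNorm R C n) (hn' : IsCompositionNorm R C n') :
    n = n' := by
  obtain ⟨hmul, hone, hreg⟩ := hn
  obtain ⟨hmul', hone', hreg'⟩ := hn'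
  obtain ⟨f, hf⟩ := n.exists_linearMap_apply_eq 1
  rw [hone] at hf
  let δ : Module.Dual R C := (polarBilin n - polarBilin n').flip 1
  have key (x : C) : δ x • x = (n x - n' x) • (1 : C) := by
    have h := (mul_self_eq_polar_smul_sub_smul_one hmul hreg.injective x).symm.trans
      (mul_self_eq_polar_smul_sub_smul_one hmul' hreg'.injective x)
    simp only [δ, LinearMap.flip_apply, LinearMap.sub_apply, polarBilin_apply_apply]
    linear_combination (norm := module) h
  have hδ : δ = 0 := by
    refine Module.Dual.eq_zero_of_apply_smul_self_mem_span hf δ ?_ fun x =>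
      Submodule.mem_span_singleton.mpr ⟨_, (key x).symm⟩
    simp [δ, polar_self, hone, hone']
  ext x
  have h := congr(f $(key x))
  simp only [hδ, LinearMap.zero_apply, zero_smul, map_zero, map_smul, hf, smul_eq_mul,
    mul_one] at h
  linear_combination -h
end
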